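/- For every infinite cardinal κ and every cardinal λ with 0 ≤ λ ≤ κ, there exists a partition P of κ whose set of complements in the partition lattice of κ has cardinality exactly κ^λ; moreover, every partition of κ has κ^λ complements for some such λ. -/

import Mathlib

/-!
Fix a class `B = [b]` of `P` and let `T` be its complement. A complement `Q` of `P` meets `B`
in singletons, so it is determined by sending each `t ∈ T` to a chosen point of its `Q`-class,
taken in `B` when possible: there are at most `κ ^ |T|` complements. When `|T| ≤ |B|`, the
kernels of the retractions of `α` onto `B` that are injective on `T` give `κ ^ |T|` of them.

This settles every partition with a class of size `κ`, and the two-block partitions give every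
`κ ^ λ`. If all classes are smaller than `κ` and `a ≠ b` lie in one class, linking each class
representative to `a` or to `b`, and independently merging any subfamily of a maximal matching
of inequivalent non-representatives, gives `2 ^ κ = κ ^ κ` complements: a maximal matching
leaves uncovered only points of a single class, so the representatives and the matching have
`κ` elements between them.
-/

/-- The set of complements of a partition `P` in the partition lattice. -/
def complements {α : Type u} (P : Setoid α) : Set (Setoid α) :=
  {Q | P ⊓ Q = ⊥ ∧ P ⊔ Q = ⊤}

open Cardinal

section

variable {α : Type*}

lemma mem_complements_of {P Q : Setoid α} (c : α) (hinf : ∀ x y, P x y → Q x y → x = y)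
    (hsup : ∀ x, (P ⊔ Q) x c) : Q ∈ complements P :=
  ⟨le_bot_iff.1 fun x y h => hinf x y (Setoid.inf_iff_and.1 h).1 (Setoid.inf_iff_and.1 h).2,
    Setoid.eq_top_iff.2 fun x y => (P ⊔ Q).trans (hsup x) ((P ⊔ Q).symm (hsup y))⟩

lemma eq_of_rel_of_mem_complements {P Q : Setoid α} (hQ : Q ∈ complements P) {x y : α}
    (hP : P x y) (hQ' : Q x y) : x = y := by
  have : (P ⊓ Q) x y := Setoid.inf_iff_and.2 ⟨hP, hQ'⟩
  rwa [hQ.1] at this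

lemma complements_bot : complements (⊥ : Setoid α) = {⊤} := by
  ext Q
  simp [complements]

lemma Setoid.ker_choice_eq (Q : Setoid α) {c : Set α → α}
    (hc : ∀ x, c {z | Q x z} ∈ {z | Q x z}) : Setoid.ker (fun x => c {z | Q x z}) = Q := by
  refine Setoid.ext fun x y => ⟨fun h => ?_, fun h => ?_⟩
  · have hx := hc x
    rw [Setoid.ker_def.1 h] at hx
    exact Q.trans hx (Q.symm (hc y))
  · exact Setoid.ker_def.2 (congrArg c (Set.ext fun z => ⟨Q.trans (Q.symm h), Q.trans h⟩))

theorem mk_complements_le_pow (P : Setoid α) (b : α) :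
    #(complements P) ≤ #α ^ #{x // ¬ P b x} := by
  classical
  let c : Set α → α := fun S =>
    if h : (S ∩ {x | P b x}).Nonempty then h.some else if h : S.Nonempty then h.some else b
  have hc : ∀ S : Set α, S.Nonempty → c S ∈ S := fun S hS => by
    by_cases h : (S ∩ {x | P b x}).Nonempty
    · simpa [c, h] using h.some_mem.1
    · simpa [c, h, hS] using hS.some_mem
  let Ψ : Setoid α → α → α := fun Q x => c {z | Q x z}
  have hΨ : ∀ Q : Setoid α, Setoid.ker (Ψ Q) = Q := fun Q =>
    Q.ker_choice_eq fun x => hc _ ⟨x, Q.refl x⟩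
  have hΨ_fix : ∀ Q ∈ complements P, ∀ y, P b y → Ψ Q y = y := by
    intro Q hQ y hy
    have h : ({z | Q y z} ∩ {x | P b x}).Nonempty := ⟨y, Q.refl y, hy⟩
    have hmem : Ψ Q y ∈ {z | Q y z} ∩ {x | P b x} := by simpa [Ψ, c, h] using h.some_mem
    exact (eq_of_rel_of_mem_complements hQ (P.trans (P.symm hy) hmem.2) hmem.1).symm
  rw [power_def]
  refine mk_le_of_injective (f := fun Q t => Ψ Q t) fun Q Q' h => Subtype.ext ?_
  have hΨQ : Ψ Q = Ψ Q' := funext fun x => by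
    by_cases hx : P b x
    · rw [hΨ_fix Q Q.2 x hx, hΨ_fix Q' Q'.2 x hx]
    · exact congrFun h ⟨x, hx⟩
  rw [← hΨ Q, ← hΨ Q', hΨQ]

lemma ker_mem_complements_of_retraction {P : Setoid α} {b : α} {r : α → α}
    (hr : ∀ x, P b (r x)) (hfix : ∀ x, P b x → r x = x)
    (hinj : ∀ x y, ¬ P b x → ¬ P b y → r x = r y → x = y) :
    Setoid.ker r ∈ complements P := by
  refine mem_complements_of b (fun x y hxy h => ?_) fun x => ?_
  · by_cases hx : P b x
    · have hy : P b y := P.trans hx hxy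
      rwa [Setoid.ker_def, hfix x hx, hfix y hy] at h
    · exact hinj x y hx (fun hy => hx (P.trans hy (P.symm hxy))) h
  · have hx : Setoid.ker r x (r x) := (hfix _ (hr x)).symm
    exact (P ⊔ Setoid.ker r).trans (le_sup_right (a := P) hx)
      (le_sup_left (b := Setoid.ker r) (P.symm (hr x)))

lemma eq_of_ker_eq_of_retraction {s : Set α} {f g : α → α} (hf : ∀ x, f x ∈ s)
    (hfs : ∀ x ∈ s, f x = x) (hgs : ∀ x ∈ s, g x = x) (h : Setoid.ker f = Setoid.ker g) :
    f = g := by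
  funext x
  have hx : Setoid.ker g x (f x) := h ▸ (hfs _ (hf x)).symm
  rw [Setoid.ker_def, hgs _ (hf x)] at hx
  exact hx.symm

theorem pow_le_mk_complements (hα : ℵ₀ ≤ #α) (P : Setoid α) (b : α)
    (hle : #{x // ¬ P b x} ≤ #{x // P b x}) : #α ^ #{x // ¬ P b x} ≤ #(complements P) := by
  classical
  set T := {x // ¬ P b x}
  set B := {x // P b x}
  have hB : #B = #α := by
    refine (mk_subtype_le _).antisymm (not_lt.1 fun h => ?_)
    exact (add_lt_of_lt hα h (hle.trans_lt h)).ne (mk_sum_compl {x | P b x})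
  obtain ⟨ι⟩ : Nonempty (T × B ↪ B) := by
    rw [← le_def, mk_prod, lift_id, lift_id]
    calc #T * #B ≤ #B * #B := mul_le_mul_left hle _
      _ = #B := mul_eq_self (hB ▸ hα)
  let r : (T → B) → α → α := fun g x =>
    if h : P b x then x else ι (⟨x, h⟩, g ⟨x, h⟩)
  have hr_fix : ∀ g x, P b x → r g x = x := fun g x hx => dif_pos hx
  have hr_of_not : ∀ g (t : T), r g t = ι (t, g t) := fun g t => dif_neg t.2
  have hr_mem : ∀ g x, P b (r g x) := fun g x => by
    by_cases hx : P b x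
    · rwa [hr_fix g x hx]
    · exact hr_of_not g ⟨x, hx⟩ ▸ (ι _).2
  have hr : ∀ g, Setoid.ker (r g) ∈ complements P := fun g => by
    refine ker_mem_complements_of_retraction (hr_mem g) (hr_fix g) fun x y hx hy h => ?_
    rw [hr_of_not g ⟨x, hx⟩, hr_of_not g ⟨y, hy⟩] at h
    exact congrArg (fun p : T × B => (p.1 : α)) (ι.injective (Subtype.ext h))
  rw [← hB, power_def]
  refine mk_le_of_injective (f := fun g => (⟨_, hr g⟩ : complements P)) fun g g' h => ?_
  have hrr := eq_of_ker_eq_of_retraction (s := {x | P b x}) (hr_mem g) (hr_fix g) (hr_fix g')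
    (congrArg Subtype.val h)
  funext t
  have ht := congrFun hrr t
  rw [hr_of_not, hr_of_not] at ht
  exact congrArg Prod.snd (ι.injective (Subtype.ext ht))

theorem mk_complements_eq_pow (hα : ℵ₀ ≤ #α) (P : Setoid α) (b : α)
    (hle : #{x // ¬ P b x} ≤ #{x // P b x}) : #(complements P) = #α ^ #{x // ¬ P b x} :=
  (mk_complements_le_pow P b).antisymm (pow_le_mk_complements hα P b hle)

lemma exists_set_mk_eq_of_le (hα : ℵ₀ ≤ #α) {lam : Cardinal} (hlam : lam ≤ #α) :
    ∃ S : Set α, #S = lam ∧ #(Sᶜ : Set α) = #α := by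
  obtain ⟨e⟩ : Nonempty (α ⊕ α ≃ α) := Cardinal.eq.1 (by simp [add_eq_self hα])
  have hinl : #(Set.range (e ∘ Sum.inl)) = #α :=
    mk_range_eq _ (e.injective.comp Sum.inl_injective)
  have hinr : #(Set.range (e ∘ Sum.inr)) = #α :=
    mk_range_eq _ (e.injective.comp Sum.inr_injective)
  obtain ⟨S, hSX, hS⟩ := le_mk_iff_exists_subset.1 (hlam.trans_eq hinl.symm)
  refine ⟨S, hS, (mk_set_le _).antisymm (hinr ▸ mk_le_mk_of_subset ?_)⟩
  rintro _ ⟨y, rfl⟩ hy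
  obtain ⟨z, hz⟩ := hSX hy
  exact Sum.inl_ne_inr (e.injective hz)

theorem exists_mk_complements_eq_pow (hα : ℵ₀ ≤ #α) {lam : Cardinal} (hlam : lam ≤ #α) :
    ∃ P : Setoid α, #(complements P) = #α ^ lam := by
  obtain ⟨S, hS, hSc⟩ := exists_set_mk_eq_of_le hα hlam
  obtain ⟨b, hb⟩ : (Sᶜ).Nonempty := by
    rw [← Set.nonempty_coe_sort, ← mk_ne_zero_iff, hSc]
    exact (aleph0_pos.trans_le hα).ne'
  replace hb : b ∉ S := hb
  have hT : #{x // ¬ Setoid.ker (· ∈ S) b x} = lam :=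
    hS ▸ mk_congr (Equiv.subtypeEquivRight fun x => by simp [Setoid.ker_def, hb])
  have hB : #{x // Setoid.ker (· ∈ S) b x} = #α :=
    hSc ▸ mk_congr (Equiv.subtypeEquivRight fun x => by simp [Setoid.ker_def, hb])
  refine ⟨Setoid.ker (· ∈ S), ?_⟩
  rw [mk_complements_eq_pow hα _ b (by rw [hT, hB]; exact hlam), hT]

section Twist

variable (P : Setoid α) (a b : α)

def classReps : Set α := {x | ¬ P a x ∧ (Quotient.mk P x).out = x}

def nonReps : Set α := {x | ¬ P a x ∧ (Quotient.mk P x).out ≠ x}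

structure IsCrossMatching (M : Set (α × α)) : Prop where
  fst_mem : ∀ ⦃x y⦄, (x, y) ∈ M → x ∈ nonReps P a
  snd_mem : ∀ ⦃x y⦄, (x, y) ∈ M → y ∈ nonReps P a
  not_rel : ∀ ⦃x y⦄, (x, y) ∈ M → ¬ P x y
  pairwiseDisjoint : M.PairwiseDisjoint fun m => ({m.1, m.2} : Set α)

/-- The kernel of `twist P a b G H` links the representative of each class `q ≠ [a]` to `b` if
`q ∈ G` and to `a` otherwise, and links the two points of each pair in `H`. -/
noncomputable def twist (G : Set (Quotient P)) (H : Set (α × α)) (x : α) : α :=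
  open Classical in
  if x ∈ classReps P a then (if Quotient.mk P x ∈ G then b else a)
  else if h : ∃ y, (x, y) ∈ H then h.choose else x

variable {P a b} {M : Set (α × α)}

namespace IsCrossMatching

variable (hM : IsCrossMatching P a M)
include hM

lemma snd_eq {x y z : α} (hy : (x, y) ∈ M) (hz : (x, z) ∈ M) : y = z :=
  congrArg Prod.snd
    (hM.pairwiseDisjoint.elim hy hz (Set.not_disjoint_iff.2 ⟨x, by simp, by simp⟩))

lemma fst_eq {x y z : α} (hx : (x, z) ∈ M) (hy : (y, z) ∈ M) : x = y :=
  congrArg Prod.fst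
    (hM.pairwiseDisjoint.elim hx hy (Set.not_disjoint_iff.2 ⟨z, by simp, by simp⟩))

lemma notMem_of_snd {x y z : α} (hxy : (x, y) ∈ M) : (y, z) ∉ M := fun hyz => by
  obtain rfl : x = y := congrArg Prod.fst
    (hM.pairwiseDisjoint.elim hxy hyz (Set.not_disjoint_iff.2 ⟨y, by simp, by simp⟩))
  exact hM.not_rel hxy (P.refl x)

end IsCrossMatching

variable {G : Set (Quotient P)} {H : Set (α × α)}

open Classical in
lemma twist_of_mem_classReps {x : α} (hx : x ∈ classReps P a) :
    twist P a b G H x = if Quotient.mk P x ∈ G then b else a := by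
  simp [twist, hx]

lemma twist_of_notMem {x : α} (hx : x ∉ classReps P a) (hH : ∀ y, (x, y) ∉ H) :
    twist P a b G H x = x := by
  simp [twist, hx, hH]

variable (hM : IsCrossMatching P a M) (hH : H ⊆ M)
include hM hH

lemma twist_of_rel {x : α} (hx : P a x) : twist P a b G H x = x :=
  twist_of_notMem (fun h => h.1 hx) fun _ h => (hM.fst_mem (hH h)).1 hx

lemma twist_of_mem {x y : α} (hxy : (x, y) ∈ H) : twist P a b G H x = y := by
  have hx : x ∉ classReps P a := fun h => (hM.fst_mem (hH hxy)).2 h.2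
  have h : ∃ y, (x, y) ∈ H := ⟨y, hxy⟩
  rw [twist, if_neg hx, dif_pos h]
  exact hM.snd_eq (hH h.choose_spec) (hH hxy)

lemma twist_of_snd {x y : α} (hxy : (x, y) ∈ M) : twist P a b G H y = y :=
  twist_of_notMem (fun h => (hM.snd_mem hxy).2 h.2) fun _ h => hM.notMem_of_snd hxy (hH h)

omit hM hH in
lemma twist_cases (hab : P a b) (x : α) :
    twist P a b G H x = x ∨ (x ∈ classReps P a ∧ P a (twist P a b G H x)) ∨
      ∃ y, (x, y) ∈ H ∧ twist P a b G H x = y := by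
  by_cases hx : x ∈ classReps P a
  · refine Or.inr (Or.inl ⟨hx, ?_⟩)
    rw [twist_of_mem_classReps hx]
    split_ifs
    exacts [hab, P.refl a]
  by_cases h : ∃ y, (x, y) ∈ H
  · exact Or.inr (Or.inr ⟨_, h.choose_spec, by rw [twist, if_neg hx, dif_pos h]⟩)
  · exact Or.inl (twist_of_notMem hx (not_exists.1 h))

lemma eq_of_rel_of_twist_eq (hab : P a b) {x y : α} (hxy : P x y)
    (h : twist P a b G H x = twist P a b G H y) : x = y := by
  rcases twist_cases hab x with hx | ⟨hxr, hxa⟩ | ⟨x', hxx', hx⟩ <;>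
    rcases twist_cases hab y with hy | ⟨hyr, hya⟩ | ⟨y', hyy', hy⟩
  · rw [← hx, h, hy]
  · rw [← h, hx] at hya
    exact (hyr.1 (P.trans hya hxy)).elim
  · have : x = y' := by rw [← hx, h, hy]
    exact (hM.not_rel (hH hyy') (this ▸ P.symm hxy)).elim
  · rw [h, hy] at hxa
    exact (hxr.1 (P.trans hxa (P.symm hxy))).elim
  · rw [← hxr.2, ← hyr.2, Quotient.sound hxy]
  · rw [h, hy] at hxa
    exact ((hM.snd_mem (hH hyy')).1 hxa).elim
  · have : y = x' := by rw [← hy, ← h, hx]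
    exact (hM.not_rel (hH hxx') (this ▸ hxy)).elim
  · rw [← h, hx] at hya
    exact ((hM.snd_mem (hH hxx')).1 hya).elim
  · have : x' = y' := by rw [← hx, h, hy]
    exact hM.fst_eq (hH hxx') (this ▸ hH hyy')

lemma ker_twist_mem_complements (hab : P a b) : Setoid.ker (twist P a b G H) ∈ complements P := by
  refine mem_complements_of a (fun x y => eq_of_rel_of_twist_eq hM hH hab) fun x => ?_
  set r := (Quotient.mk P x).out
  have hrx : P r x := Quotient.mk_out x
  by_cases hr : P a r
  · exact le_sup_left (b := Setoid.ker _) (P.symm (P.trans hr hrx))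
  have hrep : r ∈ classReps P a := ⟨hr, by simp [r]⟩
  have hra : P a (twist P a b G H r) := by
    rw [twist_of_mem_classReps hrep]
    split_ifs
    exacts [hab, P.refl a]
  have hq : Setoid.ker (twist P a b G H) r (twist P a b G H r) := (twist_of_rel hM hH hra).symm
  exact (P ⊔ _).trans (le_sup_left (b := Setoid.ker _) (P.symm hrx))
    ((P ⊔ _).trans (le_sup_right (a := P) hq) (le_sup_left (b := Setoid.ker _) (P.symm hra)))

lemma ker_twist_out_rel_iff_mem (hab : P a b) (hne : a ≠ b) {q : Quotient P}
    (hq : q ≠ Quotient.mk P a) : Setoid.ker (twist P a b G H) q.out b ↔ q ∈ G := by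
  have hrep : q.out ∈ classReps P a :=
    ⟨fun h => hq ((Quotient.out_eq q).symm.trans (Quotient.sound h).symm), by simp⟩
  rw [Setoid.ker_def, twist_of_mem_classReps hrep, twist_of_rel hM hH hab, Quotient.out_eq]
  split_ifs with h <;> simp [h, hne]

lemma mem_iff_ker_twist {x y : α} (hxy : (x, y) ∈ M) :
    (x, y) ∈ H ↔ Setoid.ker (twist P a b G H) x y := by
  refine ⟨fun h => ?_, fun h => by_contra fun hn => ?_⟩
  · rw [Setoid.ker_def, twist_of_mem hM hH h, twist_of_snd hM hH hxy]
  · have hx : twist P a b G H x = x := twist_of_notMem (fun h => (hM.fst_mem hxy).2 h.2)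
      fun z hz => hn (hM.snd_eq hxy (hH hz) ▸ hz)
    rw [Setoid.ker_def, hx, twist_of_snd hM hH hxy] at h
    exact hM.not_rel hxy (h ▸ P.refl x)

omit hH in
lemma ker_twist_injective (hab : P a b) (hne : a ≠ b) :
    Function.Injective fun GH : 𝒫 {q : Quotient P | q ≠ Quotient.mk P a} × 𝒫 M =>
      Setoid.ker (twist P a b GH.1 GH.2) := by
  rintro ⟨⟨G, hG⟩, ⟨H, hH⟩⟩ ⟨⟨G', hG'⟩, ⟨H', hH'⟩⟩ h
  simp only at h
  have hGG : G = G' := Set.ext fun q => by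
    by_cases hq : q = Quotient.mk P a
    · exact iff_of_false (fun h => hG h hq) (fun h => hG' h hq)
    · rw [← ker_twist_out_rel_iff_mem hM hH hab hne hq,
        ← ker_twist_out_rel_iff_mem hM hH' hab hne hq, h]
  have hHH : H = H' := Set.ext fun ⟨x, y⟩ => by
    by_cases hxy : (x, y) ∈ M
    · rw [mem_iff_ker_twist (b := b) (G := G) hM hH hxy,
        mem_iff_ker_twist (b := b) (G := G') hM hH' hxy, h]
    · exact iff_of_false (fun h => hxy (hH h)) (fun h => hxy (hH' h))
  subst hGG hHH
  rfl

end Twist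

lemma exists_maximal_isCrossMatching (P : Setoid α) (a : α) :
    ∃ M, Maximal (IsCrossMatching P a) M :=
  zorn_subset {M | IsCrossMatching P a M} fun c hc hchain =>
    ⟨⋃₀ c, ⟨fun _ _ ⟨_, hs, h⟩ => (hc hs).fst_mem h,
      fun _ _ ⟨_, hs, h⟩ => (hc hs).snd_mem h,
      fun _ _ ⟨_, hs, h⟩ => (hc hs).not_rel h,
      (Set.pairwise_sUnion hchain.directedOn).2 fun _ hs => (hc hs).pairwiseDisjoint⟩,
      fun _ hs => Set.subset_sUnion_of_mem hs⟩

lemma rel_of_maximal_isCrossMatching {P : Setoid α} {a : α} {M : Set (α × α)}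
    (hM : Maximal (IsCrossMatching P a) M) {u v : α}
    (hu : u ∈ nonReps P a \ (Prod.fst '' M ∪ Prod.snd '' M))
    (hv : v ∈ nonReps P a \ (Prod.fst '' M ∪ Prod.snd '' M)) : P u v := by
  by_contra huv
  have hfree : ∀ w ∈ ({u, v} : Set α), w ∉ Prod.fst '' M ∪ Prod.snd '' M := by
    rintro w (rfl | rfl)
    exacts [hu.2, hv.2]
  have hins : IsCrossMatching P a (insert (u, v) M) :=
    { fst_mem := by
        rintro x y (h | h)
        exacts [(Prod.mk.inj h).1 ▸ hu.1, hM.1.fst_mem h]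
      snd_mem := by
        rintro x y (h | h)
        exacts [(Prod.mk.inj h).2 ▸ hv.1, hM.1.snd_mem h]
      not_rel := by
        rintro x y (h | h)
        exacts [(Prod.mk.inj h).1 ▸ (Prod.mk.inj h).2 ▸ huv, hM.1.not_rel h]
      pairwiseDisjoint := hM.1.pairwiseDisjoint.insert fun m hm _ =>
        Set.disjoint_left.2 fun w hw hw' => by
          rcases hw' with h | h
          · exact hfree w hw (Or.inl ⟨m, hm, h.symm⟩)
          · exact hfree w hw (Or.inr ⟨m, hm, h.symm⟩) }
  exact hu.2 (Or.inl ⟨(u, v), hM.2 hins (Set.subset_insert _ _) (Set.mem_insert _ _), rfl⟩)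

lemma le_mk_add_mk_of_maximal (hα : ℵ₀ ≤ #α) {P : Setoid α} {a : α} {M : Set (α × α)}
    (hsmall : ∀ c, #{x // P c x} < #α) (hM : Maximal (IsCrossMatching P a) M) :
    #α ≤ #{q : Quotient P | q ≠ Quotient.mk P a} + #M := by
  by_contra! h
  have union_lt : ∀ {s t : Set α}, #s < #α → #t < #α → #(s ∪ t : Set α) < #α :=
    fun hs ht => (mk_union_le _ _).trans_lt (add_lt_of_lt hα hs ht)
  have hreps : #(classReps P a) < #α := by
    refine lt_of_le_of_lt ?_ (le_self_add.trans_lt h)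
    refine mk_le_of_injective (f := fun x : classReps P a =>
      ⟨Quotient.mk P x, fun hx => x.2.1 (Quotient.exact hx.symm)⟩) fun x y hxy => Subtype.ext ?_
    rw [← x.2.2, ← y.2.2]
    exact congrArg Quotient.out (congrArg Subtype.val hxy)
  have hMlt : #M < #α := le_add_self.trans_lt h
  have hcov : #(Prod.fst '' M ∪ Prod.snd '' M : Set α) < #α :=
    union_lt (mk_image_le.trans_lt hMlt) (mk_image_le.trans_lt hMlt)
  set U := nonReps P a \ (Prod.fst '' M ∪ Prod.snd '' M)
  have hU : #U < #α := by
    rcases U.eq_empty_or_nonempty with hU | ⟨u, hu⟩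
    · simpa [hU] using aleph0_pos.trans_le hα
    · exact (mk_le_mk_of_subset fun v hv => rel_of_maximal_isCrossMatching hM hu hv).trans_lt
        (hsmall u)
  have hall : (Set.univ : Set α) ⊆
      classReps P a ∪ {x | P a x} ∪ (Prod.fst '' M ∪ Prod.snd '' M) ∪ U := by
    intro x _
    by_cases hx : P a x
    · exact Or.inl (Or.inl (Or.inr hx))
    by_cases hr : (Quotient.mk P x).out = x
    · exact Or.inl (Or.inl (Or.inl ⟨hx, hr⟩))
    by_cases hc : x ∈ Prod.fst '' M ∪ Prod.snd '' M
    · exact Or.inl (Or.inr hc)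
    · exact Or.inr ⟨⟨hx, hr⟩, hc⟩
  have := (mk_le_mk_of_subset hall).trans_lt
    (union_lt (union_lt (union_lt hreps (hsmall a)) hcov) hU)
  exact (mk_univ (α := α) ▸ this).false

theorem two_pow_le_mk_complements (hα : ℵ₀ ≤ #α) {P : Setoid α} {a b : α} (hab : P a b)
    (hne : a ≠ b) (hsmall : ∀ c, #{x // P c x} < #α) : 2 ^ #α ≤ #(complements P) := by
  obtain ⟨M, hM⟩ := exists_maximal_isCrossMatching P a
  calc 2 ^ #α ≤ 2 ^ (#{q : Quotient P | q ≠ Quotient.mk P a} + #M) :=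
        power_le_power_left two_ne_zero (le_mk_add_mk_of_maximal hα hsmall hM)
    _ = #(𝒫 {q : Quotient P | q ≠ Quotient.mk P a} × 𝒫 M) := by
        rw [power_add, mk_prod, lift_id, lift_id, mk_powerset, mk_powerset]
    _ ≤ #(complements P) :=
        mk_le_of_injective
          (f := fun GH => ⟨_, ker_twist_mem_complements (G := GH.1.1) hM.1 GH.2.2 hab⟩)
          fun _ _ h => ker_twist_injective hM.1 hab hne (congrArg Subtype.val h)

end

/-- For every infinite cardinal κ and every cardinal `λ ≤ κ`, some partition of κ has
exactly `κ^λ` complements; moreover every partition of κ has `κ^λ` complements for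
some `λ ≤ κ`. -/
theorem stmt_18 {α : Type u} (hα : Cardinal.aleph0 ≤ Cardinal.mk α) :
    (∀ lam : Cardinal.{u}, lam ≤ Cardinal.mk α →
      ∃ P : Setoid α, Cardinal.mk (complements P) = Cardinal.mk α ^ lam) ∧
    (∀ P : Setoid α, ∃ lam : Cardinal.{u}, lam ≤ Cardinal.mk α ∧
      Cardinal.mk (complements P) = Cardinal.mk α ^ lam) := by
  refine ⟨fun lam hlam => exists_mk_complements_eq_pow hα hlam, fun P => ?_⟩
  by_cases hbig : ∃ c, #{x // P c x} = #α
  · obtain ⟨c, hc⟩ := hbig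
    exact ⟨_, mk_subtype_le _, mk_complements_eq_pow hα P c (hc ▸ mk_subtype_le _)⟩
  have hsmall : ∀ c, #{x // P c x} < #α := fun c =>
    (mk_subtype_le _).lt_of_ne fun h => hbig ⟨c, h⟩
  by_cases hbot : P = ⊥
  · exact ⟨0, zero_le, by rw [hbot, complements_bot, mk_singleton, power_zero]⟩
  obtain ⟨a, b, hab, hne⟩ : ∃ a b, P a b ∧ a ≠ b := by
    by_contra! h
    exact hbot (le_bot_iff.1 fun x y hxy => h x y hxy)
  refine ⟨#α, le_rfl, ((mk_complements_le_pow P a).trans ?_).antisymm ?_⟩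
  · exact power_le_power_left (aleph0_pos.trans_le hα).ne' (mk_subtype_le _)
  · exact power_self_eq hα ▸ two_pow_le_mk_complements hα hab hne hsmall
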